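/- arXiv:2103.02430 — 2 statements merged into one kernel-verified Lean document; each statement's English description precedes it below -/
import Mathlib

section
/- Let D be a finite subset of ℝ^n × ℝ^n and suppose that dom H_D + R_-(H_D) = ℝ^n and R_+(H_D) = im H_D + N_-(H_D) = ℝ^n, where R_-(H_D), R_+(H_D) are the reachable sets of the minimal and maximal linear processes associated with H_D and N_-(H_D) is the null-controllable set of the minimal linear process associated with H_D. Then H_D is null-controllable if and only if every convex process H ∈ Σ_D is null-controllable. -/
open Matrix Set Pointwise

/-- A set-valued map from `ℝ^n` to subsets of `ℝ^n`. -/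
abbrev SVMap (n : ℕ) := (Fin n → ℝ) → Set (Fin n → ℝ)

/-- The graph of a set-valued map. -/
def graphOf {n : ℕ} (H : SVMap n) : Set ((Fin n → ℝ) × (Fin n → ℝ)) :=
  {p | p.2 ∈ H p.1}

/-- The set-valued map associated with a graph. -/
def ofGraph {n : ℕ} (G : Set ((Fin n → ℝ) × (Fin n → ℝ))) : SVMap n :=
  fun x => {y | (x, y) ∈ G}

/-- A convex cone: a nonempty convex set closed under nonnegative scalar multiplication. -/
def IsConvexCone {V : Type*} [AddCommGroup V] [Module ℝ V] (C : Set V) : Prop :=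
  C.Nonempty ∧ Convex ℝ C ∧ ∀ c : ℝ, 0 ≤ c → ∀ x ∈ C, c • x ∈ C

/-- A convex process: a set-valued map whose graph is a convex cone. -/
def IsConvexProcess {n : ℕ} (H : SVMap n) : Prop :=
  IsConvexCone (graphOf H)

/-- A linear process: a set-valued map whose graph is a linear subspace. -/
def IsLinearProcess {n : ℕ} (H : SVMap n) : Prop :=
  ∃ S : Submodule ℝ ((Fin n → ℝ) × (Fin n → ℝ)), graphOf H = (S : Set _)

/-- The domain of a set-valued map. -/
def domOf {n : ℕ} (H : SVMap n) : Set (Fin n → ℝ) := {x | (H x).Nonempty}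

/-- The image of a set-valued map. -/
def imOf {n : ℕ} (H : SVMap n) : Set (Fin n → ℝ) := {y | ∃ x, y ∈ H x}

/-- The reachable set: states reachable from the origin by a finite trajectory. -/
def reachSet {n : ℕ} (H : SVMap n) : Set (Fin n → ℝ) :=
  {ξ | ∃ (q : ℕ) (x : ℕ → (Fin n → ℝ)),
    x 0 = 0 ∧ x q = ξ ∧ ∀ k, k < q → x (k + 1) ∈ H (x k)}

/-- The null-controllable set: states steered to the origin by a finite trajectory. -/
def nullSet {n : ℕ} (H : SVMap n) : Set (Fin n → ℝ) :=
  {ξ | ∃ (q : ℕ) (x : ℕ → (Fin n → ℝ)),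
    x 0 = ξ ∧ x q = 0 ∧ ∀ k, k < q → x (k + 1) ∈ H (x k)}

/-- The feasible set: states from which an infinite trajectory emanates. -/
def feasSet {n : ℕ} (H : SVMap n) : Set (Fin n → ℝ) :=
  {ξ | ∃ x : ℕ → (Fin n → ℝ), x 0 = ξ ∧ ∀ k, x (k + 1) ∈ H (x k)}

/-- `H` is reachable if every feasible state is reachable. -/
def IsReachable {n : ℕ} (H : SVMap n) : Prop := feasSet H ⊆ reachSet H

/-- `H` is null-controllable if every feasible state is null-controllable. -/
def IsNullControllable {n : ℕ} (H : SVMap n) : Prop := feasSet H ⊆ nullSet H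

/-- The minimal linear process `L_-` associated with `H`: graph `L_- = lin(graph H) = (-graph H) ∩ graph H`. -/
def Lminus {n : ℕ} (H : SVMap n) : SVMap n := ofGraph ((-(graphOf H)) ∩ graphOf H)

/-- The maximal linear process `L_+` associated with `H`: graph `L_+ = Lin(graph H) = graph H - graph H`. -/
def Lplus {n : ℕ} (H : SVMap n) : SVMap n := ofGraph (graphOf H - graphOf H)

/-- The negative dual process: `p ∈ H^-(q)` iff `⟨p,x⟩ ≥ ⟨q,y⟩` for all `(x,y) ∈ graph H`. -/
def dualNeg {n : ℕ} (H : SVMap n) : SVMap n :=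
  fun q => {p | ∀ x y, y ∈ H x → q ⬝ᵥ y ≤ p ⬝ᵥ x}

/-- The positive dual process: `p ∈ H^+(q)` iff `⟨p,x⟩ ≤ ⟨q,y⟩` for all `(x,y) ∈ graph H`. -/
def dualPos {n : ℕ} (H : SVMap n) : SVMap n :=
  fun q => {p | ∀ x y, y ∈ H x → p ⬝ᵥ x ≤ q ⬝ᵥ y}

/-- `(lam, ξ)` is an eigenpair of `G` if `ξ ≠ 0` and `lam • ξ ∈ G(ξ)`. -/
def IsEigenpair {n : ℕ} (G : SVMap n) (lam : ℝ) (ξ : Fin n → ℝ) : Prop :=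
  ξ ≠ 0 ∧ lam • ξ ∈ G ξ

/-- The conic hull: all conic (nonnegative) combinations of elements of `S`. -/
def coneHull {V : Type*} [AddCommGroup V] [Module ℝ V] (S : Set V) : Set V :=
  {x | ∃ (k : ℕ) (c : Fin k → ℝ) (f : Fin k → V),
    (∀ i, 0 ≤ c i) ∧ (∀ i, f i ∈ S) ∧ x = ∑ i, c i • f i}

/-- The most powerful unfalsified process `H_D`: the convex process with graph `cone D`. -/
def mpup {n : ℕ} (D : Set ((Fin n → ℝ) × (Fin n → ℝ))) : SVMap n := ofGraph (coneHull D)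

/-- The inner product on `ℝ^n × ℝ^n`. -/
def pairDot {n : ℕ} (p q : (Fin n → ℝ) × (Fin n → ℝ)) : ℝ := p.1 ⬝ᵥ q.1 + p.2 ⬝ᵥ q.2

/-- The positive polar cone of a subset of `ℝ^n × ℝ^n`. -/
def polarPos {n : ℕ} (C : Set ((Fin n → ℝ) × (Fin n → ℝ))) :
    Set ((Fin n → ℝ) × (Fin n → ℝ)) :=
  {η | ∀ d ∈ C, 0 ≤ pairDot d η}

/-- The negative polar cone of a subset of `ℝ^n × ℝ^n`. -/
def polarNeg {n : ℕ} (C : Set ((Fin n → ℝ) × (Fin n → ℝ))) :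
    Set ((Fin n → ℝ) × (Fin n → ℝ)) :=
  {η | ∀ d ∈ C, pairDot d η ≤ 0}

/-- The data set `D = {(x_t, y_t)}` whose elements are the column pairs of `X` and `Y`. -/
def colPairs {n T : ℕ} (X Y : Matrix (Fin n) (Fin T) ℝ) :
    Set ((Fin n → ℝ) × (Fin n → ℝ)) :=
  {p | ∃ t : Fin T, p = (fun i => X i t, fun i => Y i t)}

/-- The rows of the matrix `[Z −W]`, viewed as pairs `(z_i, -w_i)` in `ℝ^n × ℝ^n`. -/
def rowPairsZW {m n : ℕ} (Z W : Matrix (Fin m) (Fin n) ℝ) :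
    Set ((Fin n → ℝ) × (Fin n → ℝ)) :=
  {p | ∃ i : Fin m, p = (fun j => Z i j, fun j => -W i j)}

/-- `X ℝ_+^T`: the image of the nonnegative orthant under `X`. -/
def posImage {n T : ℕ} (X : Matrix (Fin n) (Fin T) ℝ) : Set (Fin n → ℝ) :=
  {x | ∃ v : Fin T → ℝ, (∀ t, 0 ≤ v t) ∧ x = X *ᵥ v}

/-- The set-valued map `S ↦ W^{-1}(Z S)`. -/
def mapWiZ {m n : ℕ} (Z W : Matrix (Fin m) (Fin n) ℝ) :
    Set (Fin n → ℝ) → Set (Fin n → ℝ) :=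
  fun S => {y | ∃ x ∈ S, W *ᵥ y = Z *ᵥ x}

/-- The set-valued map `S ↦ Z^{-1}(W S)`. -/
def mapZiW {m n : ℕ} (Z W : Matrix (Fin m) (Fin n) ℝ) :
    Set (Fin n → ℝ) → Set (Fin n → ℝ) :=
  fun S => {y | ∃ x ∈ S, Z *ᵥ y = W *ᵥ x}

/-- The set-valued map `S ↦ Y(X^{-1} S)`. -/
def mapYXi {n T : ℕ} (X Y : Matrix (Fin n) (Fin T) ℝ) :
    Set (Fin n → ℝ) → Set (Fin n → ℝ) :=
  fun S => {y | ∃ v : Fin T → ℝ, X *ᵥ v ∈ S ∧ y = Y *ᵥ v}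

/-- The set-valued map `S ↦ X(Y^{-1} S)`. -/
def mapXYi {n T : ℕ} (X Y : Matrix (Fin n) (Fin T) ℝ) :
    Set (Fin n → ℝ) → Set (Fin n → ℝ) :=
  fun S => {y | ∃ v : Fin T → ℝ, Y *ᵥ v ∈ S ∧ y = X *ᵥ v}

/-- The image of a set under a set-valued map. -/
def imageSV {n : ℕ} (H : SVMap n) (S : Set (Fin n → ℝ)) : Set (Fin n → ℝ) :=
  {y | ∃ x ∈ S, y ∈ H x}

/-- The inverse of a set-valued map. -/
def invSV {n : ℕ} (H : SVMap n) : SVMap n := fun y => {x | y ∈ H x}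

/-- The linear map `(a, b) ↦ (b, -a)` on `ℝ^n × ℝ^n`. -/
def flipMap {n : ℕ} : ((Fin n → ℝ) × (Fin n → ℝ)) → ((Fin n → ℝ) × (Fin n → ℝ)) :=
  fun p => (p.2, -p.1)

/-- The orthogonal complement of a subset of `ℝ^n × ℝ^n`. -/
def orthPair {n : ℕ} (C : Set ((Fin n → ℝ) × (Fin n → ℝ))) :
    Set ((Fin n → ℝ) × (Fin n → ℝ)) :=
  {q | ∀ p ∈ C, pairDot p q = 0}

/-- The dual linear process `L^⊥`, with graph `{(b, -a) : (a, b) ∈ (graph L)^⊥}`. -/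
def perpProcess {n : ℕ} (L : SVMap n) : SVMap n :=
  ofGraph (flipMap '' orthPair (graphOf L))

/-- The orthogonal complement of a subset of `ℝ^n`. -/
def orthVec {n : ℕ} (S : Set (Fin n → ℝ)) : Set (Fin n → ℝ) :=
  {x | ∀ y ∈ S, x ⬝ᵥ y = 0}

/-!
Let `C = cone D`, let `W = lin C` be the graph of `L_-`, and let `m` be a time by which the
increasing chain of subspaces `R_q(L_-)` (states reachable from `0` in exactly `q` steps) has
stabilised, so that `R_-(H_D) = R_m(L_-)`. Splitting every state as a point of `dom H_D` plus a
point of `R_m(L_-)`, and cancelling each reachable part by a trajectory of `L_-` launched `m` steps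
earlier, every state `ξ` becomes `f₀ + v` with `f₀ ∈ F(H_D)` and `v ∈ R_m(L_-)`.

If `H ⊇ H_D` is a convex process and `x` is an infinite trajectory of `H`, write `x_m = f₀ + v` and
let `z` be an `L_-`-trajectory from `0` to `-v` in `m` steps. Then `x + z` is an `H`-trajectory from
`ξ = x₀` to `f₀`, and the null-controllable `H_D ⊆ H` steers `f₀` to `0`. The converse holds because `H_D ∈ Σ_D`.
-/

section ConvexCone

variable {V : Type*} [AddCommGroup V] [Module ℝ V] {C S : Set V}

theorem IsConvexCone.smul_mem (hC : IsConvexCone C) {c : ℝ} (hc : 0 ≤ c) {x : V}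
    (hx : x ∈ C) : c • x ∈ C :=
  hC.2.2 c hc x hx

theorem IsConvexCone.zero_mem (hC : IsConvexCone C) : (0 : V) ∈ C := by
  obtain ⟨x, hx⟩ := hC.1
  simpa using hC.smul_mem le_rfl hx

theorem IsConvexCone.add_mem (hC : IsConvexCone C) {x y : V} (hx : x ∈ C) (hy : y ∈ C) :
    x + y ∈ C := by
  have hmid : (1 / 2 : ℝ) • x + (1 / 2 : ℝ) • y ∈ C :=
    hC.2.1 hx hy (by norm_num) (by norm_num) (by norm_num)
  have h2 : (2 : ℝ) • ((1 / 2 : ℝ) • x + (1 / 2 : ℝ) • y) = x + y := by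
    rw [smul_add, smul_smul, smul_smul]; norm_num
  simpa only [h2] using hC.smul_mem zero_le_two hmid

def IsConvexCone.lineality (hC : IsConvexCone C) : Submodule ℝ V where
  carrier := -C ∩ C
  zero_mem' := ⟨by simpa using hC.zero_mem, hC.zero_mem⟩
  add_mem' := fun {x y} hx hy =>
    ⟨by rw [Set.mem_neg, neg_add]; exact hC.add_mem hx.1 hy.1, hC.add_mem hx.2 hy.2⟩
  smul_mem' := by
    rintro c x ⟨hxn, hx⟩
    rcases le_total 0 c with hc | hc
    · exact ⟨by simpa using hC.smul_mem hc hxn, hC.smul_mem hc hx⟩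
    · refine ⟨by simpa using hC.smul_mem (neg_nonneg.mpr hc) hx, ?_⟩
      simpa using hC.smul_mem (neg_nonneg.mpr hc) hxn

theorem IsConvexCone.lineality_subset (hC : IsConvexCone C) : (hC.lineality : Set V) ⊆ C :=
  Set.inter_subset_right

theorem subset_coneHull : S ⊆ coneHull S := fun x hx =>
  ⟨1, fun _ => 1, fun _ => x, fun _ => zero_le_one, fun _ => hx, by simp⟩

theorem isConvexCone_coneHull (S : Set V) : IsConvexCone (coneHull S) := by
  have hsmul : ∀ c : ℝ, 0 ≤ c → ∀ x ∈ coneHull S, c • x ∈ coneHull S := by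
    rintro c hc _ ⟨k, a, f, ha, hf, rfl⟩
    exact ⟨k, fun i => c * a i, f, fun i => mul_nonneg hc (ha i), hf, by
      simp [Finset.smul_sum, smul_smul]⟩
  have hadd : ∀ x ∈ coneHull S, ∀ y ∈ coneHull S, x + y ∈ coneHull S := by
    rintro _ ⟨k, a, f, ha, hf, rfl⟩ _ ⟨l, b, g, hb, hg, rfl⟩
    refine ⟨k + l, Fin.append a b, Fin.append f g, Fin.addCases ?_ ?_, Fin.addCases ?_ ?_, ?_⟩
    all_goals simp [Fin.sum_univ_add, ha, hb, hf, hg]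
  refine ⟨⟨0, 0, Fin.elim0, Fin.elim0, Fin.rec0, Fin.rec0, by simp⟩, ?_, hsmul⟩
  intro x hx y hy a b ha hb _
  exact hadd _ (hsmul a ha x hx) _ (hsmul b hb y hy)

theorem coneHull_subset (hC : IsConvexCone C) (hSC : S ⊆ C) : coneHull S ⊆ C := by
  rintro _ ⟨k, c, f, hc, hf, rfl⟩
  exact Finset.sum_induction _ (· ∈ C) (fun _ _ => hC.add_mem) hC.zero_mem
    fun i _ => hC.smul_mem (hc i) (hSC (hf i))

end ConvexCone

section Reachability

variable {R V : Type*} [Semiring R] [AddCommMonoid V] [Module R V] (W : Submodule R (V × V))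

def reachableIn (q : ℕ) : Submodule R V where
  carrier := {v | ∃ z : ℕ → V, z 0 = 0 ∧ z q = v ∧ ∀ k < q, (z k, z (k + 1)) ∈ W}
  zero_mem' := ⟨0, rfl, rfl, fun _ _ => W.zero_mem⟩
  add_mem' := by
    rintro _ _ ⟨z, hz0, rfl, hz⟩ ⟨z', hz0', rfl, hz'⟩
    exact ⟨z + z', by simp [hz0, hz0'], rfl, fun k hk => W.add_mem (hz k hk) (hz' k hk)⟩
  smul_mem' := by
    rintro c _ ⟨z, hz0, rfl, hz⟩
    exact ⟨c • z, by simp [hz0], rfl, fun k hk => W.smul_mem c (hz k hk)⟩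

variable {W}

theorem mem_reachableIn {q : ℕ} {v : V} :
    v ∈ reachableIn W q ↔ ∃ z : ℕ → V, z 0 = 0 ∧ z q = v ∧ ∀ k < q, (z k, z (k + 1)) ∈ W :=
  Iff.rfl

variable (W)

theorem reachableIn_mono : Monotone (reachableIn W) := by
  refine monotone_nat_of_le_succ fun q v ⟨z, hz0, hzq, hz⟩ => ?_
  refine ⟨fun k => z (k - 1), hz0, hzq, fun k hk => ?_⟩
  cases k with
  | zero => simp only [Nat.zero_sub, hz0]; exact W.zero_mem
  | succ k => exact hz k (by omega)

theorem exists_forall_reachableIn_le [IsNoetherian R V] :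
    ∃ m, ∀ q, reachableIn W q ≤ reachableIn W m := by
  obtain ⟨m, hm⟩ := monotone_stabilizes_iff_noetherian.mpr inferInstance
    ⟨reachableIn W, reachableIn_mono W⟩
  refine ⟨m, fun q => ?_⟩
  rcases le_total q m with hqm | hmq
  · exact reachableIn_mono W hqm
  · exact (hm q hmq).ge

/-- The superposition at time `t` of the trajectories `w j`, where `w j` is launched at time
`j - m` and arrives at time `j`. -/
def pipeline (w : ℕ → ℕ → V) (m t : ℕ) : V :=
  ∑ i ∈ Finset.range m, w (t + m - i) i

variable {W} {w : ℕ → ℕ → V} {m : ℕ}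

theorem pipeline_zero_mem (hw0 : ∀ j, w j 0 = 0) (hw : ∀ j, ∀ k < m, (w j k, w j (k + 1)) ∈ W) :
    pipeline w m 0 ∈ reachableIn W m :=
  Submodule.sum_mem _ fun i hi =>
    reachableIn_mono W (Finset.mem_range.mp hi).le
      ⟨w (0 + m - i), hw0 _, rfl, fun k hk => hw _ k (hk.trans (Finset.mem_range.mp hi))⟩

theorem pipeline_step_mem (hw0 : ∀ j, w j 0 = 0) (hw : ∀ j, ∀ k < m, (w j k, w j (k + 1)) ∈ W)
    (t : ℕ) : (pipeline w m t, pipeline w m (t + 1) + w (t + 1) m) ∈ W := by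
  have hshift : ∑ i ∈ Finset.range m, w (t + m - i) (i + 1) =
      pipeline w m (t + 1) + w (t + 1) m := by
    have h := Finset.sum_range_succ' (fun i => w (t + 1 + m - i) i) m
    rw [Finset.sum_range_succ, hw0, add_zero, show t + 1 + m - m = t + 1 by omega] at h
    rw [pipeline, h]
    exact Finset.sum_congr rfl fun i _ => by rw [show t + 1 + m - (i + 1) = t + m - i by omega]
  have hmem : ∑ i ∈ Finset.range m, (w (t + m - i) i, w (t + m - i) (i + 1)) ∈ W :=
    Submodule.sum_mem _ fun i hi => hw _ i (Finset.mem_range.mp hi)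
  rwa [← prod_mk_sum, hshift] at hmem

end Reachability

theorem IsConvexCone.exists_trajectory_add_mem_reachableIn {V : Type*} [AddCommGroup V]
    [Module ℝ V] {C : Set (V × V)} (hC : IsConvexCone C) {m : ℕ}
    (hsplit : ∀ a : V, ∃ p ∈ C, ∃ r ∈ reachableIn hC.lineality m, a = p.1 + r) (x₀ : V) :
    ∃ f : ℕ → V, ∃ v ∈ reachableIn hC.lineality m,
      x₀ = f 0 + v ∧ ∀ k, (f k, f (k + 1)) ∈ C := by
  choose p hp r hr hpr using hsplit
  obtain ⟨a, ha0, ha⟩ : ∃ a : ℕ → V, a 0 = x₀ ∧ ∀ k, a (k + 1) = (p (a k)).2 :=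
    ⟨fun k => (fun y => (p y).2)^[k] x₀, rfl, fun k => Function.iterate_succ_apply' _ k x₀⟩
  choose w hw0 hwr hw using fun j => mem_reachableIn.mp (hr (a j))
  refine ⟨fun t => (p (a t)).1 - pipeline w m t, r (a 0) + pipeline w m 0,
    Submodule.add_mem _ (hr _) (pipeline_zero_mem hw0 hw), ?_, fun t => ?_⟩
  · dsimp only
    rw [← ha0]
    exact (hpr _).trans (by abel)
  · have hnext : (p (a t)).2 = (p (a (t + 1))).1 + r (a (t + 1)) := by rw [← ha]; exact hpr _
    have hstep := hC.add_mem (hp (a t))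
      (hC.lineality_subset (neg_mem (pipeline_step_mem hw0 hw t)))
    convert hstep using 1
    rw [hwr, Prod.neg_mk, Prod.mk_add_mk, hnext]
    ext <;> simp only <;> abel

section NullControllability

variable {n : ℕ} {H H' : SVMap n}

theorem isConvexProcess_mpup (D : Set ((Fin n → ℝ) × (Fin n → ℝ))) :
    IsConvexProcess (mpup D) :=
  isConvexCone_coneHull D

theorem subset_graphOf_mpup (D : Set ((Fin n → ℝ) × (Fin n → ℝ))) : D ⊆ graphOf (mpup D) :=
  subset_coneHull

theorem graphOf_mpup_subset {D : Set ((Fin n → ℝ) × (Fin n → ℝ))} (hH : IsConvexProcess H)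
    (hDH : D ⊆ graphOf H) : graphOf (mpup D) ⊆ graphOf H :=
  coneHull_subset hH hDH

theorem mem_reachSet_Lminus_iff (hH : IsConvexProcess H) {ξ : Fin n → ℝ} :
    ξ ∈ reachSet (Lminus H) ↔ ∃ q, ξ ∈ reachableIn (IsConvexCone.lineality hH) q :=
  Iff.rfl

theorem nullSet_mono (h : graphOf H ⊆ graphOf H') : nullSet H ⊆ nullSet H' :=
  fun _ ⟨q, x, hx0, hxq, hx⟩ => ⟨q, x, hx0, hxq, fun k hk => @h (x k, x (k + 1)) (hx k hk)⟩

theorem mem_nullSet_of_mem {ξ y : Fin n → ℝ} (hy : y ∈ H ξ) (hy₀ : y ∈ nullSet H) :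
    ξ ∈ nullSet H := by
  obtain ⟨q, x, rfl, hxq, hx⟩ := hy₀
  refine ⟨q + 1, fun | 0 => ξ | k + 1 => x k, rfl, hxq, fun k hk => ?_⟩
  cases k with
  | zero => exact hy
  | succ k => exact hx k (by omega)

theorem mem_nullSet_of_trajectory {q : ℕ} {x : ℕ → Fin n → ℝ}
    (hx : ∀ k < q, x (k + 1) ∈ H (x k)) (hxq : x q ∈ nullSet H) : x 0 ∈ nullSet H := by
  induction q generalizing x with
  | zero => exact hxq
  | succ q ih =>
    exact mem_nullSet_of_mem (hx 0 q.succ_pos)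
      (ih (x := fun k => x (k + 1)) (fun k hk => hx (k + 1) (by omega)) hxq)

theorem IsNullControllable.of_mpup {D : Set ((Fin n → ℝ) × (Fin n → ℝ))}
    (hdom : domOf (mpup D) + reachSet (Lminus (mpup D)) = Set.univ)
    (hD : IsNullControllable (mpup D)) (hH : IsConvexProcess H) (hDH : D ⊆ graphOf H) :
    IsNullControllable H := by
  have hC := isConvexProcess_mpup D
  obtain ⟨m, hm⟩ := exists_forall_reachableIn_le (IsConvexCone.lineality hC)
  have hsplit : ∀ a, ∃ p ∈ graphOf (mpup D), ∃ r ∈ reachableIn (IsConvexCone.lineality hC) m,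
      a = p.1 + r := by
    intro a
    obtain ⟨d, ⟨e, hde⟩, r, hr, rfl⟩ := hdom.symm ▸ Set.mem_univ a
    obtain ⟨q, hrq⟩ := (mem_reachSet_Lminus_iff hC).mp hr
    exact ⟨(d, e), hde, r, hm q hrq, rfl⟩
  rintro _ ⟨x, rfl, hx⟩
  obtain ⟨f, v, hv, hxm, hf⟩ := IsConvexCone.exists_trajectory_add_mem_reachableIn hC hsplit (x m)
  obtain ⟨z, hz0, hzm, hz⟩ := mem_reachableIn.mp (neg_mem hv)
  have hHD := graphOf_mpup_subset hH hDH
  have hf₀ : f 0 ∈ nullSet H := nullSet_mono hHD (hD ⟨f, rfl, hf⟩)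
  have hxz : (x + z) 0 ∈ nullSet H := by
    refine mem_nullSet_of_trajectory (q := m) (fun k hk => ?_) (by simpa [hzm, hxm] using hf₀)
    exact hH.add_mem (show (x k, x (k + 1)) ∈ graphOf H from hx k)
      (hHD (IsConvexCone.lineality_subset hC (hz k hk)))
  simpa [hz0] using hxz

end NullControllability

theorem stmt3_general {n : ℕ} (D : Set ((Fin n → ℝ) × (Fin n → ℝ)))
    (hdom : domOf (mpup D) + reachSet (Lminus (mpup D)) = Set.univ) :
    IsNullControllable (mpup D) ↔
      ∀ H : SVMap n, IsConvexProcess H → D ⊆ graphOf H → IsNullControllable H :=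
  ⟨fun hD _ hH hDH => hD.of_mpup hdom hH hDH,
    fun h => h (mpup D) (isConvexProcess_mpup D) (subset_graphOf_mpup D)⟩

/-- Theorem 4: if `dom H_D + R_-(H_D) = ℝ^n` and `R_+(H_D) = im H_D + N_-(H_D) = ℝ^n`,
then `H_D` is null-controllable iff every convex process consistent with the data `D`
is null-controllable. -/
theorem stmt3 {n : ℕ} (D : Set ((Fin n → ℝ) × (Fin n → ℝ))) (hD : D.Finite)
    (hdom : domOf (mpup D) + reachSet (Lminus (mpup D)) = Set.univ)
    (hRp : reachSet (Lplus (mpup D)) = Set.univ)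
    (him : imOf (mpup D) + nullSet (Lminus (mpup D)) = Set.univ) :
    IsNullControllable (mpup D) ↔
      ∀ H : SVMap n, IsConvexProcess H → D ⊆ graphOf H → IsNullControllable H :=
  stmt3_general D hdom
end

section
/- Let D = {(x_t,y_t) : t = 1,…,T} ⊆ ℝ^n × ℝ^n be a finite set with associated matrices X, Y ∈ ℝ^{n×T} and Z, W ∈ ℝ^{ℓ×n}. Then the reachable sets of the minimal and maximal linear processes associated with H_D satisfy R(L_-(H_D)) = (W^{-1}Z)^n({0}) and R(L_+(H_D)) = (YX^{-1})^n({0}), where the iterates are of the set-valued maps S ↦ W^{-1}(ZS) and S ↦ Y(X^{-1}S) applied n times to {0}. -/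
open Matrix Set Pointwise

/-!
The graph of `H_D` is the finitely generated cone `cone D`. Its lineality space
`-cone D ∩ cone D` consists of the points orthogonal to the polar `D⁺`: one inclusion is
immediate, the other is the bipolar theorem `D⁺⁺ = cone D`, which holds because a finitely
generated cone is closed (by Carathéodory it is a finite union of cones over linearly independent
vectors, i.e. of linear images of an orthant). As `D⁺` is generated by the rows `(z_i, -w_i)`,
the graph of `L_-(H_D)` is `{(x, y) | W y = Z x}`. The graph of `L_+(H_D)` is
`cone D - cone D = span D = {(X v, Y v)}`. Finally, for a linear process the sets reachable in
`q` steps form an increasing chain of subspaces of `ℝ^n`, which is stationary after `n` steps.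
-/

namespace PointedCone

section Module
variable {E : Type*} [AddCommGroup E] [Module ℝ E]

lemma coe_hull_eq_coneHull (s : Set E) : (hull ℝ s : Set E) = coneHull s := by
  ext x
  constructor
  · intro hx
    obtain ⟨k, c, f, rfl⟩ := Submodule.mem_span_set'.1 hx
    exact ⟨k, fun i => c i, fun i => f i, fun i => (c i).2, fun i => (f i).2, rfl⟩
  · rintro ⟨k, c, f, hc, hf, rfl⟩
    exact Submodule.sum_mem _ fun i _ => (hull ℝ s).smul_mem (hc i) (subset_hull (hf i))

lemma mem_hull_finset_iff {t : Finset E} {x : E} :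
    x ∈ hull ℝ (t : Set E) ↔ ∃ c : E → ℝ, (∀ v ∈ t, 0 ≤ c v) ∧ ∑ v ∈ t, c v • v = x := by
  constructor
  · intro hx
    obtain ⟨f, -, rfl⟩ := Submodule.mem_span_finset.1 hx
    exact ⟨fun v => f v, fun v _ => (f v).2, rfl⟩
  · rintro ⟨c, hc, rfl⟩
    exact Submodule.sum_mem _ fun v hv => (hull ℝ _).smul_mem (hc v hv) (subset_hull hv)

lemma coe_hull_range_eq_image {ι : Type*} [Fintype ι] (v : ι → E) :
    (hull ℝ (range v) : Set E) = Fintype.linearCombination ℝ v '' Ici 0 := by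
  ext x
  simp only [SetLike.mem_coe, Submodule.mem_span_range_iff_exists_fun, mem_image, mem_Ici,
    Fintype.linearCombination_apply]
  constructor
  · rintro ⟨c, rfl⟩
    exact ⟨fun i => c i, fun i => (c i).2, rfl⟩
  · rintro ⟨c, hc, rfl⟩
    exact ⟨fun i => ⟨c i, hc i⟩, rfl⟩

lemma hull_sub_hull (s : Set E) : (hull ℝ s : Set E) - hull ℝ s = Submodule.span ℝ s := by
  refine subset_antisymm ?_ fun x hx => ?_
  · rintro _ ⟨a, ha, b, hb, rfl⟩
    exact sub_mem (hull_le_span ℝ s ha) (hull_le_span ℝ s hb)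
  induction hx using Submodule.span_induction with
  | mem x hx => exact ⟨x, subset_hull hx, 0, zero_mem _, sub_zero x⟩
  | zero => exact ⟨0, zero_mem _, 0, zero_mem _, sub_zero 0⟩
  | add x y _ _ hx hy =>
    obtain ⟨a, ha, b, hb, rfl⟩ := hx
    obtain ⟨c, hc, d, hd, rfl⟩ := hy
    exact ⟨a + c, add_mem ha hc, b + d, add_mem hb hd, (sub_add_sub_comm a b c d).symm⟩
  | smul r x _ hx =>
    obtain ⟨a, ha, b, hb, rfl⟩ := hx
    rcases le_total 0 r with hr | hr
    · exact ⟨r • a, smul_mem _ hr ha, r • b, smul_mem _ hr hb, (smul_sub r a b).symm⟩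
    · refine ⟨(-r) • b, smul_mem _ (neg_nonneg.2 hr) hb, (-r) • a,
        smul_mem _ (neg_nonneg.2 hr) ha, ?_⟩
      module

/-- The reduction step of Carathéodory's theorem for cones: a linear relation among the
generators, subtracted with the largest admissible weight, kills one coefficient. -/
lemma exists_mem_hull_erase_of_not_linearIndepOn [DecidableEq E] {t : Finset E}
    (ht : ¬ LinearIndepOn ℝ id (t : Set E)) {x : E} (hx : x ∈ hull ℝ (t : Set E)) :
    ∃ y ∈ t, x ∈ hull ℝ ((t.erase y : Finset E) : Set E) := by
  obtain ⟨c, hc, rfl⟩ := mem_hull_finset_iff.1 hx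
  obtain ⟨g, hg, hpos⟩ : ∃ g : E → ℝ, ∑ v ∈ t, g v • v = 0 ∧ ∃ v ∈ t, 0 < g v := by
    obtain ⟨g, hg, i, hi, hgi⟩ := not_linearIndepOn_finset_iff.1 ht
    rcases hgi.lt_or_gt with hneg | hpos
    · exact ⟨-g, by simpa [neg_smul] using hg, i, hi, by simpa using hneg⟩
    · exact ⟨g, hg, i, hi, hpos⟩
  obtain ⟨y, hy, hmin⟩ := (t.filter (0 < g ·)).exists_min_image (fun v => c v / g v)
    (by simpa [Finset.Nonempty] using hpos)
  rw [Finset.mem_filter] at hy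
  set μ := c y / g y
  have hμ : 0 ≤ μ := div_nonneg (hc y hy.1) hy.2.le
  refine ⟨y, hy.1, mem_hull_finset_iff.2 ⟨fun v => c v - μ * g v, fun v hv => ?_, ?_⟩⟩
  · have hvt := Finset.mem_of_mem_erase hv
    rw [sub_nonneg]
    rcases lt_or_ge 0 (g v) with hgv | hgv
    · exact (le_div_iff₀ hgv).1 (hmin v (Finset.mem_filter.2 ⟨hvt, hgv⟩))
    · exact (mul_nonpos_of_nonneg_of_nonpos hμ hgv).trans (hc v hvt)
  · have hy0 : c y - μ * g y = 0 := by simp [μ, div_mul_cancel₀ _ hy.2.ne']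
    rw [Finset.sum_erase t (f := fun v => (c v - μ * g v) • v) (by simp only [hy0, zero_smul])]
    simp only [sub_smul, Finset.sum_sub_distrib, mul_smul, ← Finset.smul_sum, hg, smul_zero,
      sub_zero]

lemma exists_linearIndepOn_of_mem_hull (t : Finset E) {x : E} (hx : x ∈ hull ℝ (t : Set E)) :
    ∃ u ⊆ t, LinearIndepOn ℝ id (u : Set E) ∧ x ∈ hull ℝ (u : Set E) := by
  classical
  induction t using Finset.strongInduction with
  | H t ih =>
    by_cases ht : LinearIndepOn ℝ id (t : Set E)
    · exact ⟨t, subset_rfl, ht, hx⟩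
    obtain ⟨y, hy, hxy⟩ := exists_mem_hull_erase_of_not_linearIndepOn ht hx
    obtain ⟨u, hu, hli, hxu⟩ := ih _ (Finset.erase_ssubset hy) hxy
    exact ⟨u, hu.trans (t.erase_subset y), hli, hxu⟩

end Module

section Topology
variable {E : Type*} [NormedAddCommGroup E] [NormedSpace ℝ E]

lemma isClosed_hull_range {ι : Type*} [Finite ι] {v : ι → E} (hv : LinearIndependent ℝ v) :
    IsClosed (hull ℝ (range v) : Set E) := by
  have := Fintype.ofFinite ι
  rw [coe_hull_range_eq_image]
  have hinj : LinearMap.ker (Fintype.linearCombination ℝ v) = ⊥ :=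
    LinearMap.ker_eq_bot.2 (LinearIndependent.fintypeLinearCombination_injective hv)
  exact (LinearMap.isClosedEmbedding_of_injective hinj).isClosedMap _ isClosed_Ici

lemma isClosed_hull_of_finite {s : Set E} (hs : s.Finite) : IsClosed (hull ℝ s : Set E) := by
  classical
  lift s to Finset E using hs
  set indep := s.powerset.filter fun u : Finset E => LinearIndepOn ℝ id (u : Set E)
  have hunion : (hull ℝ (s : Set E) : Set E) =
      ⋃ (u : Finset E) (_ : u ∈ indep), (hull ℝ (u : Set E) : Set E) := by
    refine subset_antisymm (fun x hx => ?_) (iUnion₂_subset fun u hu => ?_)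
    · obtain ⟨u, hus, hli, hxu⟩ := exists_linearIndepOn_of_mem_hull s hx
      exact mem_biUnion (Finset.mem_filter.2 ⟨Finset.mem_powerset.2 hus, hli⟩) hxu
    · exact Submodule.span_mono (Finset.coe_subset.2
        (Finset.mem_powerset.1 (Finset.mem_filter.1 hu).1))
  rw [hunion]
  refine isClosed_biUnion_finset fun u hu => ?_
  simpa using isClosed_hull_range (Finset.mem_filter.1 hu).2

end Topology

end PointedCone

open PointedCone

section Pairing
variable {n : ℕ}

def pairDotₗ (η : (Fin n → ℝ) × (Fin n → ℝ)) : ((Fin n → ℝ) × (Fin n → ℝ)) →ₗ[ℝ] ℝ where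
  toFun p := pairDot p η
  map_add' p q := by simp only [pairDot, Prod.fst_add, Prod.snd_add, add_dotProduct]; ring
  map_smul' c p := by
    simp only [pairDot, Prod.smul_fst, Prod.smul_snd, smul_dotProduct, smul_eq_mul,
      RingHom.id_apply]
    ring

@[simp]
lemma pairDotₗ_apply (η p : (Fin n → ℝ) × (Fin n → ℝ)) : pairDotₗ η p = pairDot p η := rfl

lemma pairDot_comm (p q : (Fin n → ℝ) × (Fin n → ℝ)) : pairDot p q = pairDot q p := by
  simp only [pairDot, dotProduct_comm]

lemma exists_pairDot_eq (f : ((Fin n → ℝ) × (Fin n → ℝ)) →ₗ[ℝ] ℝ) :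
    ∃ η, ∀ p, pairDot p η = f p := by
  refine ⟨(fun i => f (Pi.single i 1, 0), fun i => f (0, Pi.single i 1)), fun p => ?_⟩
  have hsplit : f p = f (LinearMap.inl ℝ _ _ p.1) + f (LinearMap.inr ℝ _ _ p.2) := by
    rw [← map_add]; simp
  rw [hsplit, ← LinearMap.comp_apply, ← LinearMap.comp_apply,
    LinearMap.pi_apply_eq_sum_univ (f ∘ₗ _) p.1, LinearMap.pi_apply_eq_sum_univ (f ∘ₗ _) p.2]
  have hsingle : ∀ i : Fin n, (fun j => if i = j then (1 : ℝ) else 0) = Pi.single i 1 :=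
    fun i => funext fun j => by simp [Pi.single_apply, eq_comm]
  simp [pairDot, dotProduct, hsingle]

end Pairing

section Polar
variable {n : ℕ} {D : Set ((Fin n → ℝ) × (Fin n → ℝ))} {p η : (Fin n → ℝ) × (Fin n → ℝ)}

lemma pairDot_nonneg_of_mem_hull (hp : p ∈ hull ℝ D) (hη : η ∈ polarPos D) :
    0 ≤ pairDot p η :=
  (Submodule.span_le (p := (positive ℝ ℝ).comap (pairDotₗ η)).2 hη) hp

lemma mem_hull_of_forall_polarPos (hD : D.Finite) (hp : ∀ η ∈ polarPos D, 0 ≤ pairDot p η) :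
    p ∈ hull ℝ D := by
  by_contra hpD
  obtain ⟨f, hfD, hfp⟩ :=
    ProperCone.hyperplane_separation_point ⟨hull ℝ D, isClosed_hull_of_finite hD⟩ hpD
  obtain ⟨η, hη⟩ := exists_pairDot_eq (f : ((Fin n → ℝ) × (Fin n → ℝ)) →ₗ[ℝ] ℝ)
  have hηD : η ∈ polarPos D := fun d hd => (hη d).symm ▸ hfD d (subset_hull hd)
  exact (hp η hηD).not_gt (hη p ▸ hfp)

lemma mem_lineal_hull_iff (hD : D.Finite) :
    p ∈ (hull ℝ D).lineal ↔ ∀ η ∈ polarPos D, pairDot p η = 0 := by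
  have pairDot_neg : ∀ η, pairDot (-p) η = -pairDot p η := fun η => map_neg (pairDotₗ η) p
  constructor
  · rintro ⟨hp, hnp⟩ η hη
    have := pairDot_nonneg_of_mem_hull hnp hη
    rw [pairDot_neg] at this
    exact le_antisymm (by linarith) (pairDot_nonneg_of_mem_hull hp hη)
  · intro hp
    refine mem_lineal.2 ⟨mem_hull_of_forall_polarPos hD fun η hη => (hp η hη).ge,
      mem_hull_of_forall_polarPos hD fun η hη => ?_⟩
    rw [pairDot_neg, hp η hη, neg_zero]

end Polar

section RowPairs
variable {m n : ℕ} (Z W : Matrix (Fin m) (Fin n) ℝ)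

lemma pairDot_rowPair (p : (Fin n → ℝ) × (Fin n → ℝ)) (i : Fin m) :
    pairDot p (fun j => Z i j, fun j => -W i j) = (Z *ᵥ p.1) i - (W *ᵥ p.2) i := by
  simp [pairDot, dotProduct, mulVec, mul_comm, sub_eq_add_neg]

lemma forall_coneHull_rowPairsZW_pairDot_eq_zero_iff (p : (Fin n → ℝ) × (Fin n → ℝ)) :
    (∀ η ∈ coneHull (rowPairsZW Z W), pairDot p η = 0) ↔ W *ᵥ p.2 = Z *ᵥ p.1 := by
  constructor
  · intro h
    funext i
    have := h _ (by rw [← coe_hull_eq_coneHull]; exact subset_hull ⟨i, rfl⟩)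
    rw [pairDot_rowPair] at this
    linarith
  · intro h η hη
    rw [← coe_hull_eq_coneHull] at hη
    have hspan : Submodule.span ℝ (rowPairsZW Z W) ≤ LinearMap.ker (pairDotₗ p) := by
      rw [Submodule.span_le]
      rintro _ ⟨i, rfl⟩
      simp [pairDot_comm, pairDot_rowPair, h]
    simpa [pairDot_comm] using hspan (hull_le_span ℝ _ hη)

end RowPairs

section ColPairs
variable {n T : ℕ} (X Y : Matrix (Fin n) (Fin T) ℝ)

lemma colPairs_eq_range : colPairs X Y = range fun t => (fun i => X i t, fun i => Y i t) := by
  ext p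
  simp [colPairs, eq_comm]

lemma mem_span_colPairs (p : (Fin n → ℝ) × (Fin n → ℝ)) :
    p ∈ Submodule.span ℝ (colPairs X Y) ↔ ∃ v, X *ᵥ v = p.1 ∧ Y *ᵥ v = p.2 := by
  rw [colPairs_eq_range, Submodule.mem_span_range_iff_exists_fun]
  simp [Prod.ext_iff, mulVec_eq_sum, funext_iff, Finset.sum_apply, Prod.fst_sum, Prod.snd_sum]

end ColPairs

section Processes
variable {n : ℕ}

lemma graphOf_Lminus_mpup (D : Set ((Fin n → ℝ) × (Fin n → ℝ))) :
    graphOf (Lminus (mpup D)) = ((hull ℝ D).lineal : Set _) := by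
  change -coneHull D ∩ coneHull D = _
  ext p
  rw [← coe_hull_eq_coneHull, SetLike.mem_coe, mem_lineal, and_comm]
  rfl

lemma graphOf_Lplus_mpup (D : Set ((Fin n → ℝ) × (Fin n → ℝ))) :
    graphOf (Lplus (mpup D)) = (Submodule.span ℝ D : Set _) := by
  rw [← hull_sub_hull, coe_hull_eq_coneHull]
  rfl

lemma mem_imageSV_iff {H : SVMap n} {S : Set (Fin n → ℝ)} {y : Fin n → ℝ} :
    y ∈ imageSV H S ↔ ∃ x ∈ S, (x, y) ∈ graphOf H := Iff.rfl

end Processes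

/-- A strictly increasing chain of subspaces has length at most `d = finrank K V`, and once two
consecutive iterates agree the sequence is constant. -/
lemma Submodule.iterate_bot_le_iterate_finrank {K V : Type*} [DivisionRing K] [AddCommGroup V]
    [Module K V] [FiniteDimensional K V] {Φ : Submodule K V → Submodule K V} (hΦ : Monotone Φ)
    (k : ℕ) : Φ^[k] ⊥ ≤ Φ^[Module.finrank K V] ⊥ := by
  set d := Module.finrank K V
  have hmono : Monotone fun j => Φ^[j] ⊥ := hΦ.monotone_iterate_of_le_map bot_le
  obtain ⟨j, hjd, hfix⟩ : ∃ j ≤ d, Φ (Φ^[j] ⊥) = Φ^[j] ⊥ := by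
    by_contra! hstrict
    have hrank : ∀ j ≤ d + 1, j ≤ Module.finrank K (Φ^[j] ⊥) := by
      intro j hj
      induction j with
      | zero => exact Nat.zero_le _
      | succ j ih =>
        have hlt : Φ^[j] ⊥ < Φ^[j + 1] ⊥ := by
          refine (hmono j.le_succ).lt_of_ne fun h => hstrict j (by omega) ?_
          rw [← Function.iterate_succ_apply' Φ j ⊥]
          exact h.symm
        exact (ih (by omega)).trans_lt (Submodule.finrank_lt_finrank_of_lt hlt)
    exact absurd ((hrank (d + 1) le_rfl).trans (Submodule.finrank_le _)) (by omega)
  have hstable : ∀ i ≥ j, Φ^[i] ⊥ = Φ^[j] ⊥ := fun i hi => by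
    rw [← Nat.sub_add_cancel hi, Function.iterate_add_apply, Function.iterate_fixed hfix]
  rcases le_total k d with hkd | hdk
  · exact hmono hkd
  · rw [hstable k (hjd.trans hdk), hstable d hjd]

section Reach
variable {n : ℕ} (H : SVMap n)

lemma mem_iterate_imageSV_zero_iff (q : ℕ) (ξ : Fin n → ℝ) :
    ξ ∈ (imageSV H)^[q] {0} ↔ ∃ x : ℕ → (Fin n → ℝ),
      x 0 = 0 ∧ x q = ξ ∧ ∀ k, k < q → x (k + 1) ∈ H (x k) := by
  induction q generalizing ξ with
  | zero =>
    refine ⟨fun hξ => ⟨fun _ => ξ, hξ, rfl, fun k hk => absurd hk k.not_lt_zero⟩, ?_⟩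
    rintro ⟨x, hx0, rfl, -⟩
    exact hx0
  | succ q ih =>
    rw [Function.iterate_succ_apply']
    constructor
    · rintro ⟨ζ, hζ, hξ⟩
      obtain ⟨x, hx0, rfl, hx⟩ := (ih ζ).1 hζ
      refine ⟨Function.update x (q + 1) ξ, by simp [hx0], by simp, fun k hk => ?_⟩
      rcases Nat.lt_succ_iff_lt_or_eq.1 hk with hkq | rfl
      · simpa [Function.update_of_ne (by omega : k + 1 ≠ q + 1),
          Function.update_of_ne (by omega : k ≠ q + 1)] using hx k hkq
      · simpa [Function.update_of_ne (by omega : k ≠ k + 1)] using hξ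
    · rintro ⟨x, hx0, rfl, hx⟩
      exact ⟨x q, (ih _).2 ⟨x, hx0, rfl, fun k hk => hx k (by omega)⟩, hx q q.lt_succ_self⟩

lemma reachSet_eq_iUnion_iterate_imageSV : reachSet H = ⋃ q, (imageSV H)^[q] {0} := by
  ext ξ
  simp only [reachSet, mem_ofPred_eq, mem_iUnion, mem_iterate_imageSV_zero_iff]

lemma reachSet_eq_iterate_imageSV {H : SVMap n} (hH : IsLinearProcess H) :
    reachSet H = (imageSV H)^[n] {0} := by
  obtain ⟨G, hG⟩ := hH
  let Φ (S : Submodule ℝ (Fin n → ℝ)) : Submodule ℝ (Fin n → ℝ) :=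
    ((S.comap (LinearMap.fst ℝ _ _)) ⊓ G).map (LinearMap.snd ℝ _ _)
  have hΦ : Monotone Φ := fun S T hST =>
    Submodule.map_mono (inf_le_inf_right _ (Submodule.comap_mono hST))
  have hsemiconj : Function.Semiconj ((↑) : Submodule ℝ (Fin n → ℝ) → Set (Fin n → ℝ)) Φ
      (imageSV H) := fun S => by
    ext y
    simp [Φ, mem_imageSV_iff, hG]
  have hiter (q : ℕ) : (imageSV H)^[q] {0} = Φ^[q] ⊥ := by
    simpa using (hsemiconj.iterate_right q ⊥).symm
  rw [reachSet_eq_iUnion_iterate_imageSV]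
  refine subset_antisymm (iUnion_subset fun q => ?_)
    (subset_iUnion (fun q => (imageSV H)^[q] {0}) n)
  rw [hiter, hiter]
  simpa using Submodule.iterate_bot_le_iterate_finrank hΦ q

end Reach

/-- Reachable sets of the minimal and maximal linear processes of `H_D`:
`R(L_-(H_D)) = (W^{-1}Z)^n({0})` and `R(L_+(H_D)) = (YX^{-1})^n({0})`. -/
theorem stmt11 {n T m : ℕ} (X Y : Matrix (Fin n) (Fin T) ℝ) (Z W : Matrix (Fin m) (Fin n) ℝ)
    (hZW : polarPos (colPairs X Y) = coneHull (rowPairsZW Z W)) :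
    reachSet (Lminus (mpup (colPairs X Y))) = (mapWiZ Z W)^[n] {0} ∧
    reachSet (Lplus (mpup (colPairs X Y))) = (mapYXi X Y)^[n] {0} := by
  have hD : (colPairs X Y).Finite := colPairs_eq_range X Y ▸ finite_range _
  constructor
  · rw [reachSet_eq_iterate_imageSV ⟨_, graphOf_Lminus_mpup _⟩]
    congr 1
    ext S y
    simp only [mem_imageSV_iff, graphOf_Lminus_mpup, SetLike.mem_coe, mem_lineal_hull_iff hD, hZW,
      forall_coneHull_rowPairsZW_pairDot_eq_zero_iff]
    rfl
  · rw [reachSet_eq_iterate_imageSV ⟨_, graphOf_Lplus_mpup _⟩]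
    congr 1
    ext S y
    simp only [mem_imageSV_iff, graphOf_Lplus_mpup, SetLike.mem_coe, mem_span_colPairs]
    constructor
    · rintro ⟨x, hx, v, rfl, rfl⟩
      exact ⟨v, hx, rfl⟩
    · rintro ⟨v, hv, rfl⟩
      exact ⟨_, hv, v, rfl, rfl⟩
end
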